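/- Correctness and well-formedness determine the store on low locations: if [Σ] is well-formed w.r.t. Γ and correct w.r.t. Σ (⌊[Σ]⌋ = Σ), then for any other pair ([Σ'], Σ') with the same properties, [Σ] and [Σ'] agreeing at all bracketed/unbracketed positions on plain values implies Σ ≡_low Σ'. -/
import Mathlib


variable {PName Var Val : Type} {L : Type} [CompleteLattice L]

/-- Instrumented values: plain `v` or bracketed `[v]`. -/
inductive IVal (Val : Type) where
  | plain (v : Val)
  | brk (v : Val)

/-- Instrumented choreographic stores. -/
def IStore (PName Var Val : Type) := PName → Var → IVal Val

/-- Plain choreographic stores. -/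
def CStore (PName Var Val : Type) := PName → Var → Val

/-- Well-formedness w.r.t. Γ: the value at (p, x) is bracketed exactly when
    `¬ (Γ p x ⊑ low)`. -/
def WFStore (Γ : PName → Var → L) (low : L) (S : IStore PName Var Val) : Prop :=
  ∀ p x, (∃ v, S p x = .brk v) ↔ ¬ Γ p x ≤ low

/-- The lowering function removes brackets from values. -/
def IVal.lower : IVal Val → Val
  | .plain v => v
  | .brk v => v

/-- Pointwise lowering of an instrumented store. -/
def IStore.lower (S : IStore PName Var Val) : CStore PName Var Val :=
  fun p x => (S p x).lower

/-- Two instrumented stores agree on unbracketed values when at every location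
    where both hold plain values, those values are equal. -/
def agreePlain (S₁ S₂ : IStore PName Var Val) : Prop :=
  ∀ p x v₁ v₂, S₁ p x = .plain v₁ → S₂ p x = .plain v₂ → v₁ = v₂

/-- Low-equivalence of plain stores w.r.t. Γ and low. -/
def lowEquiv (Γ : PName → Var → L) (low : L)
    (S₁ S₂ : CStore PName Var Val) : Prop :=
  ∀ p x, Γ p x ≤ low → S₁ p x = S₂ p x

/-- Correctness (`⌊[Σ]⌋ = Σ`) and well-formedness determine stores on low
    locations: agreement on plain values implies low-equivalence. -/
theorem correct_wf_lowEquiv (Γ : PName → Var → L) (low : L)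
    (IS IS' : IStore PName Var Val) (S S' : CStore PName Var Val)
    (hwf : WFStore Γ low IS) (hcor : IS.lower = S)
    (hwf' : WFStore Γ low IS') (hcor' : IS'.lower = S')
    (hagree : agreePlain IS IS') :
    lowEquiv Γ low S S' := by
  intro p x hle
  subst hcor hcor'
  have h1 : ¬ ∃ v, IS p x = .brk v := fun h => (hwf p x).mp h hle
  have h2 : ¬ ∃ v, IS' p x = .brk v := fun h => (hwf' p x).mp h hle
  cases h : IS p x with
  | brk v => exact absurd ⟨v, h⟩ h1
  | plain v =>
    cases h' : IS' p x with
    | brk w => exact absurd ⟨w, h'⟩ h2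
    | plain w =>
      have := hagree p x v w h h'
      simp [IStore.lower, h, h', IVal.lower, this]
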